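/- arXiv:2204.12705 — 2 statements merged into one kernel-verified Lean document; each statement's English description precedes it below -/
import Mathlib

section
/- Let (M, M') be a matroid perspective on a finite totally ordered ground set E, let B be independent in M and spanning in M', and let X = (B \ Int_{M'}(B)) ∪ Ext_M(B). Then r_M(B) − r_{M'}(B) = r_M(X) − r_{M'}(X). -/
open Matroid Set
open scoped Classical

variable {α : Type*}

/-- A circuit of a matroid: a minimal dependent set. -/
def Circ (M : Matroid α) (C : Set α) : Prop := Minimal M.Dep C

/-- Contraction of a set `X` in a matroid `M`, defined via duality and restriction. -/
def mcon (M : Matroid α) (X : Set α) : Matroid α := (M✶ ↾ (M✶.E \ X))✶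

/-- The rank of a matroid: the (common) cardinality of its bases. -/
noncomputable def rkN (M : Matroid α) : ℕ := sSup (Set.ncard '' {B | M.IsBase B})

/-- The rank of a set `X` in a matroid `M`. -/
noncomputable def rset (M : Matroid α) (X : Set α) : ℕ := rkN (M ↾ X)

/-- `e` is the minimal element of the set `C`. -/
def IsMinOf [LinearOrder α] (e : α) (C : Set α) : Prop := e ∈ C ∧ ∀ f ∈ C, e ≤ f

/-- `e` is externally active in `M` with respect to `X`. -/
def ExtAct [LinearOrder α] (M : Matroid α) (X : Set α) (e : α) : Prop :=
  e ∈ M.E \ X ∧ ∃ C, Circ M C ∧ C ⊆ insert e X ∧ IsMinOf e C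

/-- `e` is internally active in `M'` with respect to `X`. -/
def IntAct [LinearOrder α] (M' : Matroid α) (X : Set α) (e : α) : Prop :=
  e ∈ X ∧ ∃ C, Circ (M'✶) C ∧ C ⊆ insert e (M'.E \ X) ∧ IsMinOf e C

/-- The set `Ext_M(X)` of externally active elements. -/
def ExtSet [LinearOrder α] (M : Matroid α) (X : Set α) : Set α := {e | ExtAct M X e}

/-- The set `Int_{M'}(X)` of internally active elements. -/
def IntSet [LinearOrder α] (M' : Matroid α) (X : Set α) : Set α := {e | IntAct M' X e}

/-- `Y` is `(M,<)`-compatible: no `M`-circuit `C` satisfies `Y ∩ C = {min C}`. -/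
def Compat [LinearOrder α] (M : Matroid α) (Y : Set α) : Prop :=
  ¬ ∃ C e, Circ M C ∧ IsMinOf e C ∧ Y ∩ C = {e}

/-- `(M, M')` is a matroid perspective: same ground set, and every circuit of `M`
is a union of circuits of `M'` (equivalently, every point of an `M`-circuit `C` lies in
an `M'`-circuit contained in `C`). -/
def Perspective (M M' : Matroid α) : Prop :=
  M.E = M'.E ∧ ∀ C, Circ M C → ∀ x ∈ C, ∃ C', Circ M' C' ∧ C' ⊆ C ∧ x ∈ C'

/-- `A` is lexicographically smaller than `B` (at the minimal element where they differ). -/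
def LexLT [LinearOrder α] (A B : Set α) : Prop :=
  ∃ e, e ∈ A ∧ e ∉ B ∧ ∀ f, f < e → (f ∈ A ↔ f ∈ B)

/-- `B` is the lexicographically minimal basis of `M`. -/
def MinBasis [LinearOrder α] (M : Matroid α) (B : Set α) : Prop :=
  M.IsBase B ∧ ∀ B', M.IsBase B' → ¬ LexLT B' B

/-- The collection `D(M, M', <)` of compatible sets of a matroid perspective. -/
def DSet [LinearOrder α] (M M' : Matroid α) : Set (Set α) :=
  {X | X ⊆ M.E ∧ Compat (M'✶) X ∧ Compat M (M.E \ X)}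

section Helpers

variable {α : Type*}

lemma Circ.dep {M : Matroid α} {C : Set α} (h : Circ M C) : M.Dep C := h.1

lemma Circ.ssubset_indep {M : Matroid α} {C I : Set α} (hC : Circ M C) (hI : I ⊂ C) :
    M.Indep I := by
  by_contra hd
  have hdep : M.Dep I := ⟨hd, hI.subset.trans hC.dep.subset_ground⟩
  exact hI.not_subset (hC.2 hdep hI.subset)

lemma exists_circ_subset [Fintype α] {M : Matroid α} {D : Set α} (hD : M.Dep D) :
    ∃ C, Circ M C ∧ C ⊆ D := by
  obtain ⟨C, hCle, hC⟩ := exists_minimal_le_of_wellFoundedLT M.Dep D hD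
  exact ⟨C, hC, hCle⟩

lemma Circ.mem_closure_diff_singleton {M : Matroid α} {C : Set α} {e : α}
    (hC : Circ M C) (he : e ∈ C) : e ∈ M.closure (C \ {e}) := by
  have hI : M.Indep (C \ {e}) := hC.ssubset_indep (Set.sdiff_singleton_ssubset.2 he)
  rw [hI.mem_closure_iff]
  left
  rw [Set.insert_diff_singleton, Set.insert_eq_of_mem he]
  exact hC.dep

lemma exists_circ_of_mem_closure [Fintype α] {M : Matroid α} {A : Set α} {x : α}
    (hA : A ⊆ M.E) (hx : x ∈ M.closure A) (hxA : x ∉ A) :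
    ∃ C, Circ M C ∧ C ⊆ insert x A ∧ x ∈ C := by
  obtain ⟨I, hI⟩ := M.exists_isBasis A hA
  have hxI : x ∈ M.closure I := by rwa [hI.closure_eq_closure]
  have hdep : M.Dep (insert x I) := by
    rcases hI.indep.mem_closure_iff.1 hxI with h | h
    · exact h
    · exact absurd (hI.subset h) hxA
  obtain ⟨C, hC, hCsub⟩ := exists_circ_subset hdep
  have hxC : x ∈ C := by
    by_contra hxc
    have hsub : C ⊆ I := fun y hy => (hCsub hy).resolve_left (by rintro rfl; exact hxc hy)
    exact (hI.indep.subset hsub).not_dep hC.dep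
  exact ⟨C, hC, hCsub.trans (Set.insert_subset_insert hI.subset), hxC⟩

lemma persp_closure [Fintype α] {M M' : Matroid α} (hP : Perspective M M')
    {A : Set α} (hA : A ⊆ M.E) : M.closure A ⊆ M'.closure A := by
  intro x hx
  by_cases hxA : x ∈ A
  · exact M'.subset_closure A (hP.1 ▸ hA) hxA
  obtain ⟨C, hC, hCsub, hxC⟩ := exists_circ_of_mem_closure hA hx hxA
  obtain ⟨C', hC', hC'C, hxC'⟩ := hP.2 C hC x hxC
  have h1 : x ∈ M'.closure (C' \ {x}) := hC'.mem_closure_diff_singleton hxC'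
  refine M'.closure_subset_closure (fun y hy => ?_) h1
  rcases hCsub (hC'C hy.1) with rfl | h
  · exact absurd rfl hy.2
  · exact h

lemma circ_inter_cocirc_ne_singleton {M : Matroid α} {C D : Set α} {f : α}
    (hC : Circ M C) (hD : Circ M✶ D) : C ∩ D ≠ {f} := by
  intro h
  have hf : f ∈ C ∩ D := h ▸ Set.mem_singleton f
  have hDE : D ⊆ M.E := hD.dep.subset_ground
  have hsub : C \ {f} ⊆ M.E \ D := fun y hy =>
    ⟨hC.dep.subset_ground hy.1, fun hyD => hy.2 (h ▸ ⟨hy.1, hyD⟩)⟩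
  have hf1 : f ∈ M.closure (M.E \ D) :=
    M.closure_subset_closure hsub (hC.mem_closure_diff_singleton hf.1)
  have hind : M✶.Indep (D \ {f}) := hD.ssubset_indep (Set.sdiff_singleton_ssubset.2 hf.2)
  have hsp : M.Spanning (M.E \ (D \ {f})) :=
    (Matroid.coindep_iff_compl_spanning ((Set.diff_subset).trans hDE)).1 hind
  have heq : M.E \ (D \ {f}) = insert f (M.E \ D) := by
    have hfE : f ∈ M.E := hDE hf.2
    ext y
    simp only [Set.mem_diff, Set.mem_insert_iff, Set.mem_singleton_iff]
    constructor
    · rintro ⟨hyE, hy⟩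
      by_cases hyf : y = f
      · exact Or.inl hyf
      · exact Or.inr ⟨hyE, fun hyD => hy ⟨hyD, hyf⟩⟩
    · rintro (rfl | ⟨hyE, hyD⟩)
      · exact ⟨hfE, fun hh => hh.2 rfl⟩
      · exact ⟨hyE, fun hh => hyD hh.1⟩
  rw [heq] at hsp
  have hcl : M.closure (M.E \ D) = M.E := by
    have h1 : insert f (M.E \ D) ⊆ M.closure (M.E \ D) :=
      Set.insert_subset hf1 (M.subset_closure _ Set.diff_subset)
    have h2 := M.closure_subset_closure_of_subset_closure h1
    rw [hsp.closure_eq] at h2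
    exact subset_antisymm (M.closure_subset_ground _) h2
  have hsp2 : M.Spanning (M.E \ D) :=
    (Matroid.spanning_iff_closure_eq Set.diff_subset).2 hcl
  have : M.Coindep D := (Matroid.coindep_iff_compl_spanning hDE).2 hsp2
  exact hD.dep.not_indep this

lemma rset_eq_ncard_of_basis {M : Matroid α} {I X : Set α} (hI : M.IsBasis I X) :
    rset M X = I.ncard := by
  have hB : (M ↾ X).IsBase I := hI.restrict_isBase
  have himg : Set.ncard '' {B | (M ↾ X).IsBase B} = {I.ncard} := by
    apply subset_antisymm
    · rintro n ⟨J, hJ, rfl⟩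
      exact hJ.ncard_eq_ncard_of_isBase hB
    · rintro n hn
      exact ⟨I, hB, (Set.mem_singleton_iff.1 hn).symm⟩
  rw [rset, rkN, himg, csSup_singleton]

end Helpers

/-- For `B` independent in `M` and spanning in `M'`, with
`X = (B \ Int_{M'}(B)) ∪ Ext_M(B)`, one has `r_M(B) - r_{M'}(B) = r_M(X) - r_{M'}(X)`. -/
theorem rank_difference_eq [Fintype α] [LinearOrder α] (M M' : Matroid α)
    (hP : Perspective M M') (B : Set α) (hBi : M.Indep B) (hBs : M'.Spanning B) :
    (rset M B : ℤ) - rset M' B =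
      (rset M ((B \ IntSet M' B) ∪ ExtSet M B) : ℤ)
        - rset M' ((B \ IntSet M' B) ∪ ExtSet M B) := by
  classical
  set S := IntSet M' B with hSdef
  set T := ExtSet M B with hTdef
  set X := (B \ S) ∪ T with hXdef
  have hBE : B ⊆ M.E := hBi.subset_ground
  have hE : M.E = M'.E := hP.1
  have hSB : S ⊆ B := fun e he => he.1
  have hTE : T ⊆ M.E := fun e he => he.1.1
  -- every element of T is in the M-closure of B \ S
  have hText : T ⊆ M.closure (B \ S) := by
    intro e he
    obtain ⟨⟨heE, heB⟩, C, hC, hCsub, hmin⟩ := he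
    have hCS : ∀ f ∈ C, f ∉ S := by
      intro f hfC hfS
      obtain ⟨hfB, D, hD, hDsub, hDmin⟩ := hfS
      obtain ⟨C'', hC'', hC''C, hfC''⟩ := hP.2 C hC f hfC
      have hne := circ_inter_cocirc_ne_singleton (f := f) hC'' hD
      have hfmem : f ∈ C'' ∩ D := ⟨hfC'', hDmin.1⟩
      have hns : ¬ (C'' ∩ D ⊆ {f}) := fun hsub =>
        hne (subset_antisymm hsub (Set.singleton_subset_iff.2 hfmem))
      obtain ⟨g, hg, hgf⟩ := Set.not_subset.1 hns
      have hgf' : g ≠ f := by simpa using hgf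
      have hgB : g ∉ B := by
        rcases hDsub hg.2 with rfl | hh
        · exact absurd rfl hgf'
        · exact hh.2
      have hge : g = e := by
        rcases hCsub (hC''C hg.1) with rfl | hh
        · rfl
        · exact absurd hh hgB
      have h1 : f ≤ e := hge ▸ hDmin.2 g hg.2
      have h2 : e ≤ f := hmin.2 f hfC
      exact heB (le_antisymm h2 h1 ▸ hfB)
    have hCsub' : C \ {e} ⊆ B \ S := by
      intro y hy
      rcases hCsub hy.1 with rfl | hh
      · exact absurd rfl hy.2
      · exact ⟨hh, hCS y hy.1⟩
    exact M.closure_subset_closure hCsub' (hC.mem_closure_diff_singleton hmin.1)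
  have hBS_indep : M.Indep (B \ S) := hBi.subset Set.diff_subset
  have hBSX : B \ S ⊆ X := Set.subset_union_left
  have hXclM : X ⊆ M.closure (B \ S) :=
    Set.union_subset (M.subset_closure _ (Set.diff_subset.trans hBE)) hText
  have hbasisMX : M.IsBasis (B \ S) X :=
    hBS_indep.isBasis_of_subset_of_subset_closure hBSX hXclM
  -- M' side
  have hBE' : B ⊆ M'.E := hE ▸ hBE
  obtain ⟨I, hI⟩ := M'.exists_isBasis (B \ S) (Set.diff_subset.trans hBE')
  have hIS_indep : M'.Indep (I ∪ S) := by
    by_contra hd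
    have hdep : M'.Dep (I ∪ S) :=
      ⟨hd, Set.union_subset hI.indep.subset_ground (hSB.trans hBE')⟩
    obtain ⟨C, hC, hCsub⟩ := exists_circ_subset hdep
    have hnsub : ¬ C ⊆ I := fun hsub => (hI.indep.subset hsub).not_dep hC.dep
    obtain ⟨f, hfC, hfI⟩ := Set.not_subset.1 hnsub
    have hfS : f ∈ S := (hCsub hfC).resolve_left hfI
    obtain ⟨hfB, D, hD, hDsub, hDmin⟩ := hfS
    apply circ_inter_cocirc_ne_singleton (f := f) hC hD
    apply subset_antisymm
    · rintro g ⟨hgC, hgD⟩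
      rcases hDsub hgD with rfl | hh
      · rfl
      · exfalso
        have hgB : g ∈ B := by
          rcases hCsub hgC with h | h
          · exact (hI.subset h).1
          · exact hSB h
        exact hh.2 hgB
    · exact Set.singleton_subset_iff.2 ⟨hfC, hDmin.1⟩
  have hdisj : Disjoint I S :=
    Set.disjoint_of_subset_left hI.subset disjoint_sdiff_left
  have hBcl : B ⊆ M'.closure (I ∪ S) := by
    intro b hb
    by_cases hbS : b ∈ S
    · exact M'.subset_closure _ hIS_indep.subset_ground (Or.inr hbS)
    · have hb' : b ∈ M'.closure (B \ S) :=
        M'.subset_closure _ (Set.diff_subset.trans hBE') ⟨hb, hbS⟩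
      rw [← hI.closure_eq_closure] at hb'
      exact M'.closure_subset_closure Set.subset_union_left hb'
  have hbasisM'B : M'.IsBasis (I ∪ S) B :=
    hIS_indep.isBasis_of_subset_of_subset_closure
      (Set.union_subset (hI.subset.trans Set.diff_subset) hSB) hBcl
  have hXclM' : X ⊆ M'.closure I := by
    have h1 : M.closure (B \ S) ⊆ M'.closure (B \ S) :=
      persp_closure hP (Set.diff_subset.trans hBE)
    have h2 : X ⊆ M'.closure (B \ S) := hXclM.trans h1
    rwa [← hI.closure_eq_closure] at h2
  have hbasisM'X : M'.IsBasis I X :=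
    hI.indep.isBasis_of_subset_of_subset_closure (hI.subset.trans hBSX) hXclM'
  rw [rset_eq_ncard_of_basis hBi.isBasis_self, rset_eq_ncard_of_basis hbasisM'B,
    rset_eq_ncard_of_basis hbasisMX, rset_eq_ncard_of_basis hbasisM'X,
    Set.ncard_union_eq hdisj]
  have h1 : (B \ S).ncard + S.ncard = B.ncard :=
    Set.ncard_diff_add_ncard_of_subset hSB
  push_cast [← h1]
  ring
end

section
/- Let M be a matroid on a finite totally ordered ground set E. Then T_M(x,y) = Σ_X (x−1)^{r(M/X)} y^{r*(M|X)}, where the sum is over all X ⊆ E such that E\X is (M,<)-compatible, and T_M is the Tutte polynomial defined via internal-external activities of bases. -/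
open Matroid Set
open scoped Classical

variable {α : Type*}

/-! ### Auxiliary circuit theory -/

section CircuitTheory

variable {M : Matroid α} {A B C D I J T X Y B₀ B₁ B₂ T₁ T₂ J₁ J₂ : Set α} {e f b g : α}

lemma circ_diff_indep (hC : Circ M C) (he : e ∈ C) : M.Indep (C \ {e}) := by
  by_contra h
  have hdep : M.Dep (C \ {e}) := ⟨h, diff_subset.trans hC.1.subset_ground⟩
  exact ((hC.2 hdep diff_subset) he).2 rfl

lemma circ_mem_closure (hC : Circ M C) (he : e ∈ C) : e ∈ M.closure (C \ {e}) := by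
  have hI := circ_diff_indep hC he
  have hd : M.Dep (insert e (C \ {e})) := by
    rw [insert_diff_singleton, insert_eq_of_mem he]; exact hC.1
  exact (hI.insert_dep_iff.1 hd).1

lemma dep_has_circ [Fintype α] (hA : M.Dep A) : ∃ C, Circ M C ∧ C ⊆ A := by
  obtain ⟨C, ⟨hCd, hCA⟩, hmin⟩ := Set.Finite.exists_minimalFor id {D | M.Dep D ∧ D ⊆ A}
    (Set.toFinite _) ⟨A, hA, Subset.rfl⟩
  exact ⟨C, ⟨hCd, fun y hy hyC => hmin ⟨hy, hyC.trans hCA⟩ hyC⟩, hCA⟩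

lemma fund_circ [Fintype α] (hI : M.Indep I) (he : e ∈ M.closure I) (heI : e ∉ I) :
    ∃ C, Circ M C ∧ C ⊆ insert e I ∧ e ∈ C := by
  have hdep : M.Dep (insert e I) := hI.insert_dep_iff.2 ⟨he, heI⟩
  obtain ⟨C, hC, hCsub⟩ := dep_has_circ hdep
  refine ⟨C, hC, hCsub, by_contra fun heC => ?_⟩
  refine hC.1.not_indep (hI.subset fun x hx => ?_)
  rcases mem_insert_iff.1 (hCsub hx) with rfl | hxI
  · exact absurd hx heC
  · exact hxI

lemma fund_cocirc (hB : M.IsBase B) (hb : b ∈ B) :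
    Circ M✶ (M.E \ M.closure (B \ {b})) ∧ b ∈ M.E \ M.closure (B \ {b}) ∧
      M.E \ M.closure (B \ {b}) ⊆ insert b (M.E \ B) := by
  have hBbE : B \ {b} ⊆ M.E := diff_subset.trans hB.subset_ground
  have hbD : b ∈ M.E \ M.closure (B \ {b}) :=
    ⟨hB.subset_ground hb, hB.indep.notMem_closure_diff_of_mem hb⟩
  have hDsub : M.E \ M.closure (B \ {b}) ⊆ insert b (M.E \ B) := by
    rintro f ⟨hfE, hfcl⟩
    by_cases hfB : f ∈ B
    · by_cases hfb : f = b
      · exact Or.inl hfb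
      · exact absurd (M.subset_closure (B \ {b}) hBbE ⟨hfB, hfb⟩) hfcl
    · exact Or.inr ⟨hfE, hfB⟩
  have hbase : ∀ f ∈ M.E \ M.closure (B \ {b}), M.IsBase (insert f (B \ {b})) := by
    intro f hf
    by_cases hfb : f = b
    · subst hfb; rwa [insert_diff_singleton, insert_eq_of_mem hb]
    · have hfB : f ∉ B := fun hfB => hf.2 (M.subset_closure _ hBbE ⟨hfB, hfb⟩)
      have hfnotin : f ∉ B \ {b} := fun h => hfB h.1
      exact hB.exchange_isBase_of_indep hfB
        (((hB.indep.subset diff_subset).insert_indep_iff_of_notMem hfnotin).2 ⟨hf.1, hf.2⟩)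
  have hdisj : ∀ f ∈ M.E \ M.closure (B \ {b}),
      Disjoint ((M.E \ M.closure (B \ {b})) \ {f}) (insert f (B \ {b})) := by
    intro f _
    rw [Set.disjoint_left]
    rintro x ⟨hxD, hxf⟩ hx
    rcases mem_insert_iff.1 hx with rfl | hx'
    · exact hxf rfl
    · exact hxD.2 (M.subset_closure _ hBbE hx')
  have hdep : M✶.Dep (M.E \ M.closure (B \ {b})) := by
    rw [dual_dep_iff_forall]
    refine ⟨fun B' hB' => ?_, diff_subset⟩
    by_contra hem
    rw [Set.not_nonempty_iff_eq_empty] at hem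
    have hB'sub : B' ⊆ M.closure (B \ {b}) := by
      intro x hx
      by_contra hxcl
      exact (Set.eq_empty_iff_forall_notMem.1 hem x) ⟨⟨hB'.subset_ground hx, hxcl⟩, hx⟩
    have hEcl : M.E ⊆ M.closure (B \ {b}) := by
      rw [← hB'.closure_eq]
      exact M.closure_subset_closure_of_subset_closure hB'sub
    exact hbD.2 (hEcl hbD.1)
  refine ⟨⟨hdep, fun D' hD' hD'sub => ?_⟩, hbD, hDsub⟩
  by_contra hnss
  obtain ⟨f, hfD, hfD'⟩ := Set.not_subset.1 hnss
  refine hD'.not_indep ?_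
  rw [dual_indep_iff_exists']
  exact ⟨hD'sub.trans diff_subset, insert f (B \ {b}), hbase f hfD,
    ((hdisj f hfD).mono_left (subset_diff_singleton hD'sub hfD'))⟩

lemma circ_cocirc_inter (hC : Circ M C) (hD : Circ M✶ D) : C ∩ D ≠ {f} := by
  intro hf
  have hfCD : f ∈ C ∩ D := by rw [hf]; rfl
  have hCf := circ_diff_indep hC hfCD.1
  have hDf := circ_diff_indep (M := M✶) hD hfCD.2
  obtain ⟨-, B₀, hB₀, hdisj⟩ := dual_indep_iff_exists'.1 hDf
  obtain ⟨B', hB', hCB', hB'sub⟩ := hCf.exists_isBase_subset_union_isBase hB₀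
  have hfB' : f ∈ B' := by
    have hne : (D ∩ B').Nonempty := by
      by_contra hem
      rw [Set.not_nonempty_iff_eq_empty] at hem
      refine hD.1.not_indep (dual_indep_iff_exists'.2 ⟨hD.1.subset_ground, B', hB',
        Set.disjoint_left.2 fun x hx hx' => (Set.eq_empty_iff_forall_notMem.1 hem x) ⟨hx, hx'⟩⟩)
    obtain ⟨x, hxD, hxB'⟩ := hne
    rcases hB'sub hxB' with hx | hx
    · exact absurd (show x ∈ ({f} : Set α) from hf ▸ ⟨hx.1, hxD⟩) hx.2
    · have hxf : x = f := by
        by_contra hxf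
        exact (Set.disjoint_left.1 hdisj ⟨hxD, hxf⟩) hx
      exact hxf ▸ hxB'
  refine hC.1.not_indep (hB'.indep.subset fun x hx => ?_)
  by_cases hxf : x = f
  · exact hxf ▸ hfB'
  · exact hCB' ⟨hx, hxf⟩

lemma witness_disjoint [LinearOrder α] (hC : Circ M C) (hCsub : C ⊆ insert e B) (hCe : IsMinOf e C)
    (heB : e ∉ B) (hD : Circ M✶ D) (hDsub : D ⊆ insert b (M.E \ B)) (hDb : IsMinOf b D)
    (hbB : b ∈ B) : C ∩ D = ∅ := by
  by_contra hne
  obtain ⟨x, hxC, hxD⟩ := Set.nonempty_iff_ne_empty.2 hne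
  have hsub : C ∩ D ⊆ {e, b} := by
    rintro y ⟨hyC, hyD⟩
    rcases mem_insert_iff.1 (hCsub hyC) with rfl | hyB
    · exact Or.inl rfl
    · rcases mem_insert_iff.1 (hDsub hyD) with rfl | hyB'
      · exact Or.inr rfl
      · exact absurd hyB hyB'.2
  have hkey : e ∈ C ∩ D ∧ b ∈ C ∩ D := by
    rcases hsub ⟨hxC, hxD⟩ with rfl | hxb
    · refine ⟨⟨hxC, hxD⟩, ?_⟩
      by_contra hb'
      refine circ_cocirc_inter hC hD (f := x) (Set.Subset.antisymm (fun y hy => ?_) ?_)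
      · rcases hsub hy with rfl | hyb
        · rfl
        · rw [mem_singleton_iff.1 hyb] at hy
          exact absurd hy hb'
      · rintro y rfl
        exact ⟨hxC, hxD⟩
    · rw [mem_singleton_iff.1 hxb] at hxC hxD
      refine ⟨?_, ⟨hxC, hxD⟩⟩
      by_contra he'
      refine circ_cocirc_inter hC hD (f := b) (Set.Subset.antisymm (fun y hy => ?_) ?_)
      · rcases hsub hy with rfl | hyb
        · exact absurd hy he'
        · exact hyb
      · rintro y rfl
        exact ⟨hxC, hxD⟩
  obtain ⟨heCD, hbCD⟩ := hkey
  have h1 : b ≤ e := hDb.2 e heCD.2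
  have h2 : e ≤ b := hCe.2 b hbCD.1
  exact heB ((le_antisymm h2 h1) ▸ hbB)

end CircuitTheory

/-! ### Activity lemmas -/

section Activity

variable [LinearOrder α] {M : Matroid α} {B C D I J T X Y B₀ B₁ B₂ T₁ T₂ J₁ J₂ : Set α} {e f b g : α}

lemma ext_mem_closure (he : ExtAct M B e) :
    e ∈ M.closure ((B \ IntSet M B) ∩ Set.Ioi e) := by
  obtain ⟨⟨heE, heB⟩, C, hC, hCsub, hCe⟩ := he
  have hsub : C \ {e} ⊆ (B \ IntSet M B) ∩ Set.Ioi e := by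
    rintro f ⟨hfC, hfe⟩
    have hfe' : f ≠ e := fun h => hfe (h ▸ rfl)
    have hfB : f ∈ B := by
      rcases mem_insert_iff.1 (hCsub hfC) with rfl | h
      · exact absurd rfl hfe'
      · exact h
    refine ⟨⟨hfB, fun hfInt => ?_⟩, lt_of_le_of_ne (hCe.2 f hfC) (Ne.symm hfe')⟩
    obtain ⟨hfBmem, Df, hDf, hDfsub, hDfmin⟩ := hfInt
    have hem := witness_disjoint hC hCsub hCe heB hDf hDfsub hDfmin hfBmem
    exact (Set.eq_empty_iff_forall_notMem.1 hem f) ⟨hfC, hDfmin.1⟩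
  exact M.closure_subset_closure hsub (circ_mem_closure hC hCe.1)

lemma int_mem_dual_closure (hb : IntAct M B b) :
    b ∈ M✶.closure (((M.E \ B) \ ExtSet M B) ∩ Set.Ioi b) := by
  obtain ⟨hbB, D, hD, hDsub, hDb⟩ := hb
  have hsub : D \ {b} ⊆ ((M.E \ B) \ ExtSet M B) ∩ Set.Ioi b := by
    rintro f ⟨hfD, hfb⟩
    have hfb' : f ≠ b := fun h => hfb (h ▸ rfl)
    have hfB : f ∈ M.E \ B := by
      rcases mem_insert_iff.1 (hDsub hfD) with rfl | h
      · exact absurd rfl hfb'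
      · exact h
    refine ⟨⟨hfB, fun hfExt => ?_⟩, lt_of_le_of_ne (hDb.2 f hfD) (Ne.symm hfb')⟩
    obtain ⟨⟨hfE, hfB'⟩, Cf, hCf, hCfsub, hCfmin⟩ := hfExt
    have hem := witness_disjoint hCf hCfsub hCfmin hfB' hD hDsub hDb hbB
    exact (Set.eq_empty_iff_forall_notMem.1 hem f) ⟨hCfmin.1, hfD⟩
  exact M✶.closure_subset_closure hsub (circ_mem_closure (M := M✶) hD hDb.1)

lemma indep_unique [Fintype α] (h1 : M.Indep J₁) (h2 : M.Indep J₂)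
    (hc1 : ∀ e ∈ J₁ \ J₂, e ∈ M.closure (J₂ ∩ Set.Ioi e))
    (hc2 : ∀ e ∈ J₂ \ J₁, e ∈ M.closure (J₁ ∩ Set.Ioi e)) : J₁ = J₂ := by
  by_contra hne
  have hSne : ((J₁ \ J₂) ∪ (J₂ \ J₁)).Nonempty := by
    rw [Set.nonempty_iff_ne_empty]
    intro h0
    rw [Set.union_empty_iff, diff_eq_empty, diff_eq_empty] at h0
    exact hne (Set.Subset.antisymm h0.1 h0.2)
  obtain ⟨g, hgS, hgmax⟩ := Set.exists_max_image _ id (Set.toFinite _) hSne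
  rcases hgS with hg | hg
  · have hmem := hc1 g hg
    have hsub : J₂ ∩ Set.Ioi g ⊆ J₁ \ {g} := by
      rintro z ⟨hzJ, hzg⟩
      refine ⟨?_, fun h => absurd (mem_singleton_iff.1 h) hzg.ne'⟩
      by_contra hz'
      exact absurd (hgmax z (Or.inr ⟨hzJ, hz'⟩)) (not_le.2 hzg)
    exact h1.notMem_closure_diff_of_mem hg.1 (M.closure_subset_closure hsub hmem)
  · have hmem := hc2 g hg
    have hsub : J₁ ∩ Set.Ioi g ⊆ J₂ \ {g} := by
      rintro z ⟨hzJ, hzg⟩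
      refine ⟨?_, fun h => absurd (mem_singleton_iff.1 h) hzg.ne'⟩
      by_contra hz'
      exact absurd (hgmax z (Or.inl ⟨hzJ, hz'⟩)) (not_le.2 hzg)
    exact h2.notMem_closure_diff_of_mem hg.1 (M.closure_subset_closure hsub hmem)

/-! ### Properties of the map `(B, T) ↦ (B \ T) ∪ Ext(B)` -/

lemma extSet_subset : ExtSet M B ⊆ M.E \ B := fun _ he => he.1

lemma phi_subset_ground (hB : M.IsBase B) :
    (B \ T) ∪ ExtSet M B ⊆ M.E :=
  union_subset (diff_subset.trans hB.subset_ground) (fun e he => he.1.1)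

lemma ext_closure_phi (hB : M.IsBase B) (hT : T ⊆ IntSet M B) :
    (B \ T) ∪ ExtSet M B ⊆ M.closure (B \ T) := by
  refine Set.union_subset (M.subset_closure _ (diff_subset.trans hB.subset_ground))
    fun e he => ?_
  refine M.closure_subset_closure ?_ (ext_mem_closure he)
  exact fun z hz => ⟨hz.1.1, fun hzT => hz.1.2 (hT hzT)⟩

lemma phi_basis (hB : M.IsBase B) (hT : T ⊆ IntSet M B) :
    M.IsBasis (B \ T) ((B \ T) ∪ ExtSet M B) :=
  (hB.indep.subset diff_subset).isBasis_of_subset_of_subset_closure subset_union_left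
    (ext_closure_phi hB hT)

lemma compl_phi (hB : M.IsBase B) (hT : T ⊆ IntSet M B) :
    M.E \ ((B \ T) ∪ ExtSet M B) = ((M.E \ B) \ ExtSet M B) ∪ T := by
  have hTB : T ⊆ B := fun z hz => (hT hz).1
  ext z
  constructor
  · rintro ⟨hzE, hz⟩
    by_cases hzB : z ∈ B
    · refine Or.inr ?_
      by_contra hzT
      exact hz (Or.inl ⟨hzB, hzT⟩)
    · exact Or.inl ⟨⟨hzE, hzB⟩, fun hzS => hz (Or.inr hzS)⟩
  · rintro (⟨⟨hzE, hzB⟩, hzS⟩ | hzT)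
    · exact ⟨hzE, fun h => h.elim (fun h' => hzB h'.1) hzS⟩
    · refine ⟨hB.subset_ground (hTB hzT), fun h => ?_⟩
      rcases h with h' | h'
      · exact h'.2 hzT
      · exact h'.1.2 (hTB hzT)

lemma phi_dual_basis (hB : M.IsBase B) (hT : T ⊆ IntSet M B) :
    M✶.IsBasis ((M.E \ B) \ ExtSet M B) (M.E \ ((B \ T) ∪ ExtSet M B)) := by
  rw [compl_phi hB hT]
  refine (hB.compl_isBase_dual.indep.subset diff_subset).isBasis_of_subset_of_subset_closure
    subset_union_left ?_
  refine Set.union_subset (M✶.subset_closure _ ?_) fun b hbT => ?_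
  · rw [dual_ground]; exact diff_subset.trans diff_subset
  · refine M✶.closure_subset_closure ?_ (int_mem_dual_closure (hT hbT))
    exact fun z hz => hz.1

lemma rkN_eq_ncard {N : Matroid α} (hB₀ : N.IsBase B₀) : rkN N = B₀.ncard := by
  have himg : Set.ncard '' {B | N.IsBase B} = {B₀.ncard} := by
    apply Set.Subset.antisymm
    · rintro n ⟨B₁, hB₁, rfl⟩
      exact hB₁.ncard_eq_ncard_of_isBase hB₀
    · rintro n hn
      exact ⟨B₀, hB₀, (mem_singleton_iff.1 hn).symm⟩
  rw [rkN, himg, csSup_singleton]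

lemma phi_X_diff_ext (hB : M.IsBase B) (hT : T ⊆ IntSet M B) :
    ((B \ T) ∪ ExtSet M B) \ ExtSet M B = B \ T := by
  apply Set.Subset.antisymm
  · rintro z ⟨hz, hzS⟩
    exact hz.resolve_right hzS
  · rintro z hz
    exact ⟨Or.inl hz, fun hzS => hzS.1.2 hz.1⟩

lemma phi_nullity (hB : M.IsBase B) (hT : T ⊆ IntSet M B) :
    rkN ((M ↾ ((B \ T) ∪ ExtSet M B))✶) = (ExtSet M B).ncard := by
  have hXE : (B \ T) ∪ ExtSet M B ⊆ M.E := phi_subset_ground hB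
  have hbase : (M ↾ ((B \ T) ∪ ExtSet M B))✶.IsBase (ExtSet M B) := by
    rw [dual_isBase_iff (by rw [restrict_ground_eq]; exact subset_union_right)]
    rw [restrict_ground_eq, phi_X_diff_ext hB hT, isBase_restrict_iff hXE]
    exact phi_basis hB hT
  exact rkN_eq_ncard hbase

lemma phi_T_subset_compl (hB : M.IsBase B) (hT : T ⊆ IntSet M B) :
    T ⊆ M.E \ ((B \ T) ∪ ExtSet M B) := by
  rw [compl_phi hB hT]; exact subset_union_right

lemma phi_compl_diff_T (hB : M.IsBase B) (hT : T ⊆ IntSet M B) :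
    (M.E \ ((B \ T) ∪ ExtSet M B)) \ T = (M.E \ B) \ ExtSet M B := by
  rw [compl_phi hB hT]
  have hTB : T ⊆ B := fun z hz => (hT hz).1
  apply Set.Subset.antisymm
  · rintro z ⟨hz, hzT⟩
    exact hz.resolve_right hzT
  · rintro z hz
    exact ⟨Or.inl hz, fun hzT => hz.1.2 (hTB hzT)⟩

lemma phi_rank (hB : M.IsBase B) (hT : T ⊆ IntSet M B) :
    rkN (mcon M ((B \ T) ∪ ExtSet M B)) = T.ncard := by
  have hbase : (M✶ ↾ (M✶.E \ ((B \ T) ∪ ExtSet M B)))✶.IsBase T := by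
    have hTsub : T ⊆ (M✶ ↾ (M✶.E \ ((B \ T) ∪ ExtSet M B))).E := by
      rw [restrict_ground_eq, dual_ground]
      exact phi_T_subset_compl hB hT
    rw [dual_isBase_iff hTsub, restrict_ground_eq, dual_ground, phi_compl_diff_T hB hT,
      isBase_restrict_iff (show M.E \ (B \ T ∪ ExtSet M B) ⊆ M✶.E from by
        rw [dual_ground]; exact diff_subset)]
    exact phi_dual_basis hB hT
  rw [mcon]
  exact rkN_eq_ncard hbase

lemma phi_compat [Fintype α] (hB : M.IsBase B) (hT : T ⊆ IntSet M B) :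
    Compat M (M.E \ ((B \ T) ∪ ExtSet M B)) := by
  rintro ⟨C, g, hC, hg, hYC⟩
  have hgYC : g ∈ (M.E \ ((B \ T) ∪ ExtSet M B)) ∩ C := by rw [hYC]; rfl
  have hgY := hgYC.1
  have hgC := hgYC.2
  have hCX : C \ {g} ⊆ (B \ T) ∪ ExtSet M B := by
    rintro z ⟨hzC, hzg⟩
    by_contra hzX
    have hzY : z ∈ (M.E \ ((B \ T) ∪ ExtSet M B)) ∩ C :=
      ⟨⟨hC.1.subset_ground hzC, hzX⟩, hzC⟩
    rw [hYC] at hzY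
    exact hzg hzY
  have hgWT : g ∈ ((M.E \ B) \ ExtSet M B) ∪ T := by
    rw [← compl_phi hB hT]; exact hgY
  rcases hgWT with hgW | hgT
  · -- g ∉ B, g not externally active : derive that it is, contradiction
    have hgB : g ∉ B := hgW.1.2
    have hgIoi : g ∈ M.closure ((B \ T) ∩ Set.Ioi g) := by
      have h1 : g ∈ M.closure (C \ {g}) := circ_mem_closure hC hgC
      refine M.closure_subset_closure_of_subset_closure (fun z hz => ?_) h1
      have hzX := hCX hz
      have hzg : g < z := lt_of_le_of_ne (hg.2 z hz.1) (fun h => hz.2 (h ▸ rfl))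
      rcases hzX with hzJ | hzS
      · exact M.subset_closure _
          ((inter_subset_left.trans diff_subset).trans hB.subset_ground) ⟨hzJ, hzg⟩
      · refine M.closure_subset_closure ?_ (ext_mem_closure hzS)
        rintro w ⟨⟨hwB, hwInt⟩, hwz⟩
        exact ⟨⟨hwB, fun hwT => hwInt (hT hwT)⟩, lt_trans hzg hwz⟩
    obtain ⟨C'', hC'', hC''sub, hgC''⟩ := fund_circ
      (hB.indep.subset (inter_subset_left.trans diff_subset)) hgIoi (fun h => hgB h.1.1)
    refine hgW.2 ⟨⟨hgW.1.1, hgB⟩, C'', hC'',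
      hC''sub.trans (insert_subset_insert (inter_subset_left.trans diff_subset)), hgC'',
      fun f hf => ?_⟩
    rcases mem_insert_iff.1 (hC''sub hf) with rfl | hfI
    · exact le_refl f
    · exact le_of_lt hfI.2
  · -- g ∈ T : internally active, contradiction with circuit/cocircuit
    have hgB : g ∈ B := (hT hgT).1
    have hgJ : g ∉ B \ T := fun h => h.2 hgT
    have hgcl : g ∈ M.closure (B \ T) := by
      have h1 : g ∈ M.closure (C \ {g}) := circ_mem_closure hC hgC
      exact M.closure_subset_closure_of_subset_closure
        (fun z hz => ext_closure_phi hB hT (hCX hz)) h1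
    obtain ⟨C', hC', hC'sub, hgC'⟩ := fund_circ (hB.indep.subset diff_subset) hgcl hgJ
    obtain ⟨_, D, hD, hDsub, hDg⟩ := hT hgT
    refine circ_cocirc_inter hC' hD (f := g) (Set.Subset.antisymm ?_ ?_)
    · rintro z ⟨hzC', hzD⟩
      rcases mem_insert_iff.1 (hC'sub hzC') with rfl | hzJ
      · rfl
      · rcases mem_insert_iff.1 (hDsub hzD) with rfl | hzEB
        · rfl
        · exact absurd hzJ.1 hzEB.2
    · rintro z rfl
      exact ⟨hgC', hDg.1⟩

end Activity

/-! ### Weights, surjectivity and injectivity -/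

section Weights

variable [Fintype α] [LinearOrder α] {M : Matroid α}
  {B C D I J T X Y B₀ B₁ B₂ T₁ T₂ J₁ J₂ : Set α} {e f b g : α}

/-- The number of elements smaller than `a`. -/
noncomputable def rnk (a : α) : ℕ := (Finset.univ.filter (· < a)).card

lemma rnk_lt_rnk {a c : α} (h : a < c) : rnk a < rnk c := by
  apply Finset.card_lt_card
  rw [Finset.ssubset_iff_of_subset (fun z hz => ?_)]
  · exact ⟨a, by simp [h], by simp⟩
  · simp only [Finset.mem_filter, Finset.mem_univ, true_and] at hz ⊢
    exact hz.trans h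

/-- The 2-adic weight of an element. -/
noncomputable def wt (a : α) : ℕ := 2 ^ rnk a

lemma wt_lt_wt {a c : α} (h : a < c) : wt a < wt c :=
  Nat.pow_lt_pow_right one_lt_two (rnk_lt_rnk h)

/-- The total weight of a set. -/
noncomputable def wsum (S : Set α) : ℕ := ∑ a ∈ S.toFinset, wt a

lemma sum_range_two_pow (n : ℕ) : ∑ k ∈ Finset.range n, 2 ^ k = 2 ^ n - 1 := by
  induction n with
  | zero => simp
  | succ n ih =>
    rw [Finset.sum_range_succ, ih, pow_succ]
    have h1 : 1 ≤ 2 ^ n := Nat.one_le_two_pow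
    omega

lemma wsum_lt_wt {S : Set α} {e : α} (h : ∀ f ∈ S, f < e) : wsum S < wt e := by
  have hinj : ∀ a ∈ S.toFinset, ∀ c ∈ S.toFinset, rnk a = rnk c → a = c := by
    intro a _ c _ hac
    rcases lt_trichotomy a c with h' | h' | h'
    · exact absurd hac (rnk_lt_rnk h').ne
    · exact h'
    · exact absurd hac.symm (rnk_lt_rnk h').ne
  have h1 : wsum S = ∑ k ∈ S.toFinset.image rnk, 2 ^ k := (Finset.sum_image hinj).symm
  have h2 : S.toFinset.image rnk ⊆ Finset.range (rnk e) := by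
    intro k hk
    obtain ⟨a, ha, rfl⟩ := Finset.mem_image.1 hk
    exact Finset.mem_range.2 (rnk_lt_rnk (h a (Set.mem_toFinset.1 ha)))
  calc wsum S = ∑ k ∈ S.toFinset.image rnk, 2 ^ k := h1
    _ ≤ ∑ k ∈ Finset.range (rnk e), 2 ^ k := Finset.sum_le_sum_of_subset h2
    _ = 2 ^ rnk e - 1 := sum_range_two_pow _
    _ < 2 ^ rnk e := by have h3 : 1 ≤ 2 ^ rnk e := Nat.one_le_two_pow; omega

lemma wsum_union_disjoint {S S' : Set α} (h : Disjoint S S') :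
    wsum (S ∪ S') = wsum S + wsum S' := by
  rw [wsum, Set.toFinset_union, Finset.sum_union (by
    rw [Finset.disjoint_left]
    intro a ha ha'
    exact Set.disjoint_left.1 h (Set.mem_toFinset.1 ha) (Set.mem_toFinset.1 ha'))]
  rfl

lemma wsum_le_of_subset {S S' : Set α} (h : S ⊆ S') : wsum S ≤ wsum S' :=
  Finset.sum_le_sum_of_subset (fun a ha => Set.mem_toFinset.2 (h (Set.mem_toFinset.1 ha)))

lemma wsum_insert {S : Set α} (h : e ∉ S) : wsum (insert e S) = wt e + wsum S := by
  rw [wsum]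
  simp only [Set.toFinset_insert]
  rw [Finset.sum_insert (fun h' => h (Set.mem_toFinset.1 h'))]
  rfl

lemma diff_diff_self_of_subset (h : T ⊆ B) : B \ (B \ T) = T := by
  ext z
  constructor
  · rintro ⟨hzB, hz⟩
    by_contra hzT
    exact hz ⟨hzB, hzT⟩
  · exact fun hz => ⟨h hz, fun h' => h'.2 hz⟩

lemma phi_surj (hX : X ⊆ M.E) (hcompat : Compat M (M.E \ X)) :
    ∃ B T, M.IsBase B ∧ T ⊆ IntSet M B ∧ X = (B \ T) ∪ ExtSet M B := by
  -- Step 1 : a weight-maximal basis `J` of `X`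
  obtain ⟨J, hJ, hJmax⟩ := Set.exists_max_image {J | M.IsBasis J X} wsum (Set.toFinite _)
    (M.exists_isBasis X hX)
  have hPJ : ∀ e ∈ X \ J, e ∈ M.closure (J ∩ Set.Ioi e) := by
    rintro e ⟨heX, heJ⟩
    by_contra hecl
    have heIoi : e ∉ J ∩ Set.Ioi e := fun h => heJ h.1
    have hIi : M.Indep (insert e (J ∩ Set.Ioi e)) :=
      ((hJ.indep.subset inter_subset_left).insert_indep_iff_of_notMem heIoi).2 ⟨hX heX, hecl⟩
    obtain ⟨J', hJ', hsubJ'⟩ := hIi.subset_isBasis_of_subset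
      (insert_subset heX (inter_subset_left.trans hJ.subset)) hX
    have h1 : wt e + wsum (J ∩ Set.Ioi e) ≤ wsum J' := by
      rw [← wsum_insert heIoi]
      exact wsum_le_of_subset hsubJ'
    have h2 : wsum J = wsum (J ∩ Set.Ioi e) + wsum (J \ Set.Ioi e) := by
      rw [← wsum_union_disjoint (disjoint_sdiff_right.mono_left inter_subset_right),
        Set.inter_union_diff]
    have h3 : wsum (J \ Set.Ioi e) < wt e := by
      refine wsum_lt_wt fun f hf => ?_
      have hfe : f ≤ e := not_lt.1 hf.2
      exact lt_of_le_of_ne hfe (fun h => heJ (h ▸ hf.1))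
    exact absurd (hJmax J' hJ') (not_le.2 (by omega))
  -- Step 2 : a weight-minimal base `B` containing `J`
  have hBne : {B | M.IsBase B ∧ J ⊆ B}.Nonempty := by
    obtain ⟨B0, h1, h2⟩ := hJ.indep.exists_isBase_superset
    exact ⟨B0, h1, h2⟩
  obtain ⟨B, hBmem, hBmin⟩ := Set.exists_min_image {B | M.IsBase B ∧ J ⊆ B} wsum
    (Set.toFinite _) hBne
  obtain ⟨hB, hJB⟩ := hBmem
  have hBX : J = B ∩ X :=
    hJ.eq_of_subset_indep (hB.indep.subset inter_subset_left)
      (subset_inter hJB hJ.subset) inter_subset_right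
  have hTInt : ∀ b ∈ B \ J, IntAct M B b := by
    rintro b ⟨hbB, hbJ⟩
    obtain ⟨hcocirc, hbD, hDsub⟩ := fund_cocirc hB hbB
    refine ⟨hbB, _, hcocirc, hDsub, hbD, fun f hf => ?_⟩
    by_contra hlt
    push_neg at hlt
    have hfb : f ≠ b := ne_of_lt hlt
    have hBbE : B \ {b} ⊆ M.E := diff_subset.trans hB.subset_ground
    have hfB : f ∉ B := fun hfB => hf.2 (M.subset_closure _ hBbE ⟨hfB, hfb⟩)
    have hB'' : M.IsBase (insert f (B \ {b})) :=
      hB.exchange_isBase_of_indep hfB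
        (((hB.indep.subset diff_subset).insert_indep_iff_of_notMem
          (fun h => hfB h.1)).2 ⟨hf.1, hf.2⟩)
    have hJB'' : J ⊆ insert f (B \ {b}) := fun z hz =>
      Or.inr ⟨hJB hz, fun h => hbJ (mem_singleton_iff.1 h ▸ hz)⟩
    have hfnB : f ∉ B \ {b} := fun h => hfB h.1
    have hlt' : wsum (insert f (B \ {b})) < wsum B := by
      rw [wsum_insert hfnB]
      have hBsplit : wsum B = wt b + wsum (B \ {b}) := by
        rw [← wsum_insert (fun h : b ∈ B \ {b} => h.2 rfl), insert_diff_singleton,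
          insert_eq_of_mem hbB]
      rw [hBsplit]
      have := wt_lt_wt hlt
      omega
    exact absurd (hBmin _ ⟨hB'', hJB''⟩) (not_le.2 hlt')
  refine ⟨B, B \ J, hB, fun b hb => hTInt b hb, ?_⟩
  rw [diff_diff_self_of_subset hJB]
  apply Set.Subset.antisymm
  · intro z hzX
    by_cases hzJ : z ∈ J
    · exact Or.inl hzJ
    · refine Or.inr ?_
      have hzB : z ∉ B := fun hzB => hzJ (by rw [hBX]; exact ⟨hzB, hzX⟩)
      obtain ⟨C, hC, hCsub, hzC⟩ := fund_circ (hJ.indep.subset inter_subset_left)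
        (hPJ z ⟨hzX, hzJ⟩) (fun h => hzJ h.1)
      refine ⟨⟨hX hzX, hzB⟩, C, hC,
        hCsub.trans (insert_subset_insert (inter_subset_left.trans hJB)), hzC, fun f hf => ?_⟩
      rcases mem_insert_iff.1 (hCsub hf) with rfl | hfI
      · exact le_refl f
      · exact le_of_lt hfI.2
  · refine Set.union_subset hJ.subset fun e he => ?_
    by_contra heX
    obtain ⟨⟨heE, heB⟩, C, hC, hCsub, hCe⟩ := he
    refine hcompat ⟨C, e, hC, hCe, Set.Subset.antisymm ?_ ?_⟩
    · rintro z ⟨hzY, hzC⟩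
      by_contra hz
      have hze : z ≠ e := fun h => hz (h ▸ rfl)
      have hzB : z ∈ B := by
        rcases mem_insert_iff.1 (hCsub hzC) with rfl | h
        · exact absurd rfl hze
        · exact h
      have hzJ : z ∉ J := fun hzJ => hzY.2 (hJ.subset hzJ)
      obtain ⟨_, D, hD, hDsub, hDmin⟩ := hTInt z ⟨hzB, hzJ⟩
      have hem := witness_disjoint hC hCsub hCe heB hD hDsub hDmin hzB
      exact (Set.eq_empty_iff_forall_notMem.1 hem z) ⟨hzC, hDmin.1⟩
    · rintro z rfl
      exact ⟨⟨heE, heX⟩, hCe.1⟩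

lemma phi_inj (hB₁ : M.IsBase B₁) (hT₁ : T₁ ⊆ IntSet M B₁)
    (hB₂ : M.IsBase B₂) (hT₂ : T₂ ⊆ IntSet M B₂)
    (heq : (B₁ \ T₁) ∪ ExtSet M B₁ = (B₂ \ T₂) ∪ ExtSet M B₂) : B₁ = B₂ ∧ T₁ = T₂ := by
  have hJ12 : B₁ \ T₁ = B₂ \ T₂ := by
    apply indep_unique (hB₁.indep.subset diff_subset) (hB₂.indep.subset diff_subset)
    · intro e he
      have heX : e ∈ (B₂ \ T₂) ∪ ExtSet M B₂ := heq ▸ (Or.inl he.1)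
      have heS : e ∈ ExtSet M B₂ := heX.resolve_left he.2
      refine M.closure_subset_closure ?_ (ext_mem_closure heS)
      rintro z ⟨⟨hz1, hz2⟩, hz3⟩
      exact ⟨⟨hz1, fun h => hz2 (hT₂ h)⟩, hz3⟩
    · intro e he
      have heX : e ∈ (B₁ \ T₁) ∪ ExtSet M B₁ := heq.symm ▸ (Or.inl he.1)
      have heS : e ∈ ExtSet M B₁ := heX.resolve_left he.2
      refine M.closure_subset_closure ?_ (ext_mem_closure heS)
      rintro z ⟨⟨hz1, hz2⟩, hz3⟩
      exact ⟨⟨hz1, fun h => hz2 (hT₁ h)⟩, hz3⟩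
  have hW12 : M.E \ B₁ = M.E \ B₂ := by
    apply indep_unique (M := M✶) hB₁.compl_isBase_dual.indep hB₂.compl_isBase_dual.indep
    · rintro b ⟨⟨hbE, hbB₁⟩, hb2⟩
      have hbB₂ : b ∈ B₂ := by
        by_contra h
        exact hb2 ⟨hbE, h⟩
      have hbT₂ : b ∈ T₂ := by
        by_contra hbT
        exact hbB₁ (show b ∈ B₁ \ T₁ from hJ12.symm ▸ (⟨hbB₂, hbT⟩ : b ∈ B₂ \ T₂)).1
      refine M✶.closure_subset_closure ?_ (int_mem_dual_closure (hT₂ hbT₂))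
      rintro z ⟨⟨hz1, _⟩, hz3⟩
      exact ⟨hz1, hz3⟩
    · rintro b ⟨⟨hbE, hbB₂⟩, hb1⟩
      have hbB₁ : b ∈ B₁ := by
        by_contra h
        exact hb1 ⟨hbE, h⟩
      have hbT₁ : b ∈ T₁ := by
        by_contra hbT
        exact hbB₂ (show b ∈ B₂ \ T₂ from hJ12 ▸ (⟨hbB₁, hbT⟩ : b ∈ B₁ \ T₁)).1
      refine M✶.closure_subset_closure ?_ (int_mem_dual_closure (hT₁ hbT₁))
      rintro z ⟨⟨hz1, _⟩, hz3⟩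
      exact ⟨hz1, hz3⟩
  have hB12 : B₁ = B₂ := by
    have h1 : B₁ = M.E \ (M.E \ B₁) := (Set.diff_diff_cancel_left hB₁.subset_ground).symm
    rw [h1, hW12, Set.diff_diff_cancel_left hB₂.subset_ground]
  refine ⟨hB12, ?_⟩
  have hT₁B : T₁ ⊆ B₁ := fun z hz => (hT₁ hz).1
  have hT₂B : T₂ ⊆ B₂ := fun z hz => (hT₂ hz).1
  calc T₁ = B₁ \ (B₁ \ T₁) := (diff_diff_self_of_subset hT₁B).symm
    _ = B₂ \ (B₂ \ T₂) := by rw [hJ12, hB12]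
    _ = T₂ := diff_diff_self_of_subset hT₂B

end Weights

section Assembly

variable [Fintype α] [LinearOrder α]

/-- A choice of preimage pair for the bijection `(B, T) ↦ (B \ T) ∪ Ext(B)`. -/
noncomputable def invPair (M : Matroid α) (X : Set α) : Set α × Set α :=
  if h : ∃ p : Set α × Set α, M.IsBase p.1 ∧ p.2 ⊆ IntSet M p.1 ∧
      X = (p.1 \ p.2) ∪ ExtSet M p.1 then h.choose else (∅, ∅)

lemma invPair_spec {M : Matroid α} {X : Set α} (hX : X ⊆ M.E)
    (hc : Compat M (M.E \ X)) :
    M.IsBase (invPair M X).1 ∧ (invPair M X).2 ⊆ IntSet M (invPair M X).1 ∧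
      X = ((invPair M X).1 \ (invPair M X).2) ∪ ExtSet M (invPair M X).1 := by
  obtain ⟨B, T, h1, h2, h3⟩ := phi_surj hX hc
  have hex : ∃ p : Set α × Set α, M.IsBase p.1 ∧ p.2 ⊆ IntSet M p.1 ∧
      X = (p.1 \ p.2) ∪ ExtSet M p.1 := ⟨(B, T), h1, h2, h3⟩
  rw [invPair, dif_pos hex]
  exact hex.choose_spec

lemma sum_ite_bij {β γ : Type*} [Fintype β] [Fintype γ] {R : Type*} [AddCommMonoid R]
    (P : β → Prop) (Q : γ → Prop) [DecidablePred P] [DecidablePred Q]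
    (i : β → γ) (j : γ → β) (f : β → R) (h : γ → R)
    (hPQ : ∀ b, P b → Q (i b)) (hQP : ∀ c, Q c → P (j c))
    (hji : ∀ b, P b → j (i b) = b) (hij : ∀ c, Q c → i (j c) = c)
    (hval : ∀ b, P b → f b = h (i b)) :
    ∑ b : β, (if P b then f b else 0) = ∑ c : γ, (if Q c then h c else 0) := by
  rw [← Finset.sum_filter, ← Finset.sum_filter]
  refine Finset.sum_nbij' i j ?_ ?_ ?_ ?_ ?_
  · intro a ha
    rw [Finset.mem_filter] at ha ⊢
    exact ⟨Finset.mem_univ _, hPQ a ha.2⟩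
  · intro a ha
    rw [Finset.mem_filter] at ha ⊢
    exact ⟨Finset.mem_univ _, hQP a ha.2⟩
  · intro a ha
    rw [Finset.mem_filter] at ha
    exact hji a ha.2
  · intro a ha
    rw [Finset.mem_filter] at ha
    exact hij a ha.2
  · intro a ha
    rw [Finset.mem_filter] at ha
    exact hval a ha.2

end Assembly

/-- The alternate compatible-sets expansion of the ordinary Tutte polynomial:
`T_M(x,y) = Σ_{E\X (M,<)-compatible} (x-1)^{r(M/X)} y^{r*(M|X)}`. -/
theorem tutte_alternate_expansion [Fintype α] [LinearOrder α] (M : Matroid α)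
    {R : Type*} [CommRing R] (x y : R) :
    ∑ B : Set α, (if M.IsBase B then
        x ^ (IntSet M B).ncard * y ^ (ExtSet M B).ncard else 0) =
    ∑ X : Set α, (if X ⊆ M.E ∧ Compat M (M.E \ X) then
        (x - 1) ^ rkN (mcon M X) * y ^ rkN ((M ↾ X)✶) else 0) := by
  classical
  have key : ∀ B : Set α, (if M.IsBase B then
      x ^ (IntSet M B).ncard * y ^ (ExtSet M B).ncard else 0) =
      ∑ T : Finset α, (if M.IsBase B ∧ ↑T ⊆ IntSet M B then
        (x - 1) ^ T.card * y ^ (ExtSet M B).ncard else 0) := by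
    intro B
    by_cases hB : M.IsBase B
    · simp only [hB, if_true, true_and]
      rw [← Finset.sum_filter]
      have hfilter : Finset.univ.filter (fun T : Finset α => ↑T ⊆ IntSet M B) =
          (IntSet M B).toFinset.powerset := by
        ext T
        simp [Finset.mem_powerset, ← Set.subset_toFinset]
      rw [hfilter, ← Finset.sum_mul]
      congr 1
      have hexp : ∀ s : Finset α, (x : R) ^ s.card = ∑ t ∈ s.powerset, (x - 1) ^ t.card := by
        intro s
        calc (x : R) ^ s.card = ∏ _a ∈ s, ((x - 1) + 1) := by
              rw [Finset.prod_const]; ring_nf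
          _ = ∑ t ∈ s.powerset, (∏ _a ∈ t, (x - 1)) * ∏ _a ∈ s \ t, (1 : R) :=
              Finset.prod_add _ _ s
          _ = ∑ t ∈ s.powerset, (x - 1) ^ t.card := by
              refine Finset.sum_congr rfl fun t _ => ?_
              rw [Finset.prod_const, Finset.prod_const, one_pow, mul_one]
      rw [Set.ncard_eq_toFinset_card', hexp]
    · simp [hB]
  rw [Finset.sum_congr rfl (fun B _ => key B)]
  have hprod : (∑ p : Set α × Finset α, (if M.IsBase p.1 ∧ ↑p.2 ⊆ IntSet M p.1 then
        (x - 1) ^ p.2.card * y ^ (ExtSet M p.1).ncard else 0)) =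
      ∑ B : Set α, ∑ T : Finset α, (if M.IsBase B ∧ ↑T ⊆ IntSet M B then
        (x - 1) ^ T.card * y ^ (ExtSet M B).ncard else 0) := Fintype.sum_prod_type _
  rw [← hprod]
  refine sum_ite_bij
    (fun p : Set α × Finset α => M.IsBase p.1 ∧ ↑p.2 ⊆ IntSet M p.1)
    (fun X : Set α => X ⊆ M.E ∧ Compat M (M.E \ X))
    (fun p => (p.1 \ ↑p.2) ∪ ExtSet M p.1)
    (fun X => ((invPair M X).1, (invPair M X).2.toFinset))
    (fun p => (x - 1) ^ p.2.card * y ^ (ExtSet M p.1).ncard)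
    (fun X => (x - 1) ^ rkN (mcon M X) * y ^ rkN ((M ↾ X)✶))
    ?_ ?_ ?_ ?_ ?_
  · rintro ⟨B, T⟩ ⟨hB, hT⟩
    exact ⟨phi_subset_ground hB, phi_compat hB hT⟩
  · rintro X ⟨hX, hc⟩
    obtain ⟨h1, h2, _⟩ := invPair_spec hX hc
    refine ⟨h1, ?_⟩
    rwa [Set.coe_toFinset]
  · rintro ⟨B, T⟩ ⟨hB, hT⟩
    obtain ⟨h1, h2, h3⟩ := invPair_spec (phi_subset_ground hB) (phi_compat hB hT)
    obtain ⟨hBeq, hTeq⟩ := phi_inj h1 h2 hB hT h3.symm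
    simp only [Prod.mk.injEq]
    refine ⟨hBeq, ?_⟩
    rw [hTeq]
    ext z
    simp
  · rintro X ⟨hX, hc⟩
    obtain ⟨h1, h2, h3⟩ := invPair_spec hX hc
    simp only [Set.coe_toFinset]
    exact h3.symm
  · rintro ⟨B, T⟩ ⟨hB, hT⟩
    have h1 := phi_rank hB hT
    have h2 := phi_nullity hB hT
    dsimp only
    rw [h1, h2, Set.ncard_coe_finset]
end
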